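/- arXiv:2412.17021 — 2 statements merged into one kernel-verified Lean document; each statement's English description precedes it below -/
import Mathlib

section
/- Let $\Psi: [a,U] \to \mathbb{R}$ be continuous, strictly convex, and differentiable on $(a,U)$. For $t \in (a,U]$ define $\widetilde{\Lambda}(t) = \max_{z \in [a,t]} \big\{ \Psi(a) + \frac{\Psi(t)-\Psi(a)}{t-a}(z-a) - \Psi(z) \big\}$, the maximum gap between the chord from $a$ to $t$ and $\Psi$. Then $\widetilde{\Lambda}$ is strictly increasing on $(a,U]$. -/
/-!
The gap function `z ↦ chord_t(z) - Ψ z` grows with `t` at every `z > a`, because the slope of the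
chord from `a` to `t` is strictly increasing in `t` for a strictly convex `Ψ`. Its maximum over
`[a, t₁]` is attained, and not at `z = a` (where the gap vanishes) since strict convexity makes the
gap positive inside `(a, t₁)`. Evaluating the larger gap for `t₂` at that maximiser gives the strict
increase.
-/

open Set

noncomputable def chordGap (f : ℝ → ℝ) (a t z : ℝ) : ℝ :=
  f a + (f t - f a) / (t - a) * (z - a) - f z

lemma chordGap_self_left (f : ℝ → ℝ) (a t : ℝ) : chordGap f a t a = 0 := by
  simp [chordGap]

lemma ContinuousOn.chordGap {f : ℝ → ℝ} {s : Set ℝ} (hf : ContinuousOn f s) (a t : ℝ) :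
    ContinuousOn (chordGap f a t) s := by
  unfold _root_.chordGap
  fun_prop

lemma StrictConvexOn.chordGap_pos {s : Set ℝ} {f : ℝ → ℝ} (hf : StrictConvexOn ℝ s f)
    {a t z : ℝ} (ha : a ∈ s) (ht : t ∈ s) (haz : a < z) (hzt : z < t) :
    0 < chordGap f a t z := by
  have hslope := hf.secant_strict_mono_aux2 ha ht haz hzt
  rw [div_lt_iff₀ (sub_pos.2 haz)] at hslope
  unfold chordGap
  linarith

lemma StrictConvexOn.chordGap_lt_chordGap {s : Set ℝ} {f : ℝ → ℝ} (hf : StrictConvexOn ℝ s f)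
    {a t₁ t₂ z : ℝ} (ha : a ∈ s) (ht₁ : t₁ ∈ s) (ht₂ : t₂ ∈ s) (hat₁ : a < t₁) (ht₁₂ : t₁ < t₂)
    (haz : a < z) : chordGap f a t₁ z < chordGap f a t₂ z := by
  have hslope := hf.secant_strict_mono ha ht₁ ht₂ hat₁.ne' (hat₁.trans ht₁₂).ne' ht₁₂
  have := mul_lt_mul_of_pos_right hslope (sub_pos.2 haz)
  unfold chordGap
  linarith

lemma StrictConvexOn.exists_sSup_chordGap_eq {s : Set ℝ} {f : ℝ → ℝ} {a t : ℝ}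
    (hf : StrictConvexOn ℝ s f) (hcont : ContinuousOn f (Icc a t)) (ha : a ∈ s) (ht : t ∈ s)
    (hat : a < t) :
    ∃ z ∈ Ioc a t, sSup (chordGap f a t '' Icc a t) = chordGap f a t z := by
  obtain ⟨z, hz, hsup, hzmax⟩ := isCompact_Icc.exists_sSup_image_eq_and_ge
    (nonempty_Icc.2 hat.le) (hcont.chordGap a t)
  refine ⟨z, ⟨lt_of_le_of_ne hz.1 ?_, hz.2⟩, hsup⟩
  rintro rfl
  have hmid := hzmax ((a + t) / 2) ⟨by linarith, by linarith⟩
  have hpos := hf.chordGap_pos ha ht (by linarith : a < (a + t) / 2) (by linarith)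
  linarith [chordGap_self_left f a t]

theorem stmt_17_general (a U : ℝ) (Ψ : ℝ → ℝ)
    (hcont : ContinuousOn Ψ (Set.Icc a U))
    (hconv : StrictConvexOn ℝ (Set.Icc a U) Ψ) :
    StrictMonoOn
      (fun t => sSup ((fun z => Ψ a + (Ψ t - Ψ a) / (t - a) * (z - a) - Ψ z) ''
        Set.Icc a t))
      (Set.Ioc a U) := by
  rintro t₁ ⟨hat₁, ht₁U⟩ t₂ ⟨hat₂, ht₂U⟩ ht₁₂
  have ha : a ∈ Icc a U := ⟨le_rfl, hat₁.le.trans ht₁U⟩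
  have ht₁ : t₁ ∈ Icc a U := ⟨hat₁.le, ht₁U⟩
  have ht₂ : t₂ ∈ Icc a U := ⟨hat₂.le, ht₂U⟩
  obtain ⟨z, hz, hsup⟩ := hconv.exists_sSup_chordGap_eq
    (hcont.mono (Icc_subset_Icc_right ht₁U)) ha ht₁ hat₁
  have hbdd : BddAbove (chordGap Ψ a t₂ '' Icc a t₂) :=
    (isCompact_Icc.image_of_continuousOn
      ((hcont.mono (Icc_subset_Icc_right ht₂U)).chordGap a t₂)).bddAbove
  show sSup (chordGap Ψ a t₁ '' Icc a t₁) < sSup (chordGap Ψ a t₂ '' Icc a t₂)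
  calc sSup (chordGap Ψ a t₁ '' Icc a t₁)
      = chordGap Ψ a t₁ z := hsup
    _ < chordGap Ψ a t₂ z := hconv.chordGap_lt_chordGap ha ht₁ ht₂ hat₁ ht₁₂ hz.1
    _ ≤ sSup (chordGap Ψ a t₂ '' Icc a t₂) :=
      le_csSup hbdd (mem_image_of_mem _ ⟨hz.1.le, hz.2.trans ht₁₂.le⟩)

/-- the maximum gap between the chord from `a` to `t` and a
strictly convex function is strictly increasing in `t`. -/
theorem stmt_17 (a U : ℝ) (haU : a < U) (Ψ : ℝ → ℝ)
    (hcont : ContinuousOn Ψ (Set.Icc a U))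
    (hconv : StrictConvexOn ℝ (Set.Icc a U) Ψ)
    (hdiff : DifferentiableOn ℝ Ψ (Set.Ioo a U)) :
    StrictMonoOn
      (fun t => sSup ((fun z => Ψ a + (Ψ t - Ψ a) / (t - a) * (z - a) - Ψ z) ''
        Set.Icc a t))
      (Set.Ioc a U) :=
  stmt_17_general a U Ψ hcont hconv
end

section
/- Let $\Phi: [a,b] \to \mathbb{R}$ be concave, let $\Gamma^{IA}(t) = \Phi(a) + \frac{\Phi(b)-\Phi(a)}{b-a}(t-a)$ be the chord, and let $\Gamma^{OA}: [a,b] \to \mathbb{R}$ be any affine function with $\Gamma^{OA} \geq \Phi$ on $[a,b]$. Then $\max_{t \in [a,b]} |\Phi(t) - \Gamma^{IA}(t)| \leq \max_{t \in [a,b]} |\Phi(t) - \Gamma^{OA}(t)|$. -/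
/-!
On `[a, b]` the concave `Φ` lies between its chord and the affine majorant `ΓOA`, so both errors
are bounded pointwise by `ΓOA t - chord Φ t`. Since `ΓOA` equals its own chord, this difference is
the chord of `ΓOA - Φ`, hence at most the larger of the endpoint errors `ΓOA a - Φ a`,
`ΓOA b - Φ b`, both of which are errors of the outer approximation.
-/

open Set

noncomputable def chord (f : ℝ → ℝ) (a b t : ℝ) : ℝ := f a + (f b - f a) / (b - a) * (t - a)

section Chord

variable {f : ℝ → ℝ} {a b t : ℝ}

lemma chord_eq_add_mul (f : ℝ → ℝ) (a b t : ℝ) :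
    chord f a b t = f a + (t - a) / (b - a) * (f b - f a) := by
  unfold chord; ring

lemma chord_sub (f g : ℝ → ℝ) (a b t : ℝ) :
    chord (fun s => f s - g s) a b t = chord f a b t - chord g a b t := by
  unfold chord; ring

lemma chord_of_affine {c d : ℝ} (hf : ∀ s, f s = c * s + d) (hab : a ≠ b) :
    chord f a b t = f t := by
  have hba : b - a ≠ 0 := sub_ne_zero.mpr hab.symm
  simp only [chord, hf]
  field_simp
  ring

lemma div_sub_mem_Icc_of_mem_Icc (hab : a < b) (ht : t ∈ Icc a b) :
    (t - a) / (b - a) ∈ Icc (0 : ℝ) 1 := by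
  have hba : 0 < b - a := sub_pos.mpr hab
  exact ⟨div_nonneg (sub_nonneg.mpr ht.1) hba.le,
    (div_le_one hba).mpr (sub_le_sub_right ht.2 a)⟩

lemma chord_le_max (hab : a < b) (ht : t ∈ Icc a b) :
    chord f a b t ≤ max (f a) (f b) := by
  obtain ⟨hμ0, hμ1⟩ := div_sub_mem_Icc_of_mem_Icc hab ht
  set μ := (t - a) / (b - a)
  calc chord f a b t = (1 - μ) * f a + μ * f b := by rw [chord_eq_add_mul]; ring
    _ ≤ (1 - μ) * max (f a) (f b) + μ * max (f a) (f b) := by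
        have : 0 ≤ 1 - μ := sub_nonneg.mpr hμ1
        gcongr
        exacts [le_max_left _ _, le_max_right _ _]
    _ = max (f a) (f b) := by ring

lemma ConcaveOn.chord_le (hf : ConcaveOn ℝ (Icc a b) f) (hab : a < b) (ht : t ∈ Icc a b) :
    chord f a b t ≤ f t := by
  obtain ⟨hμ0, hμ1⟩ := div_sub_mem_Icc_of_mem_Icc hab ht
  set μ := (t - a) / (b - a)
  have ht_eq : (1 - μ) • a + μ • b = t := by
    have : μ * (b - a) = t - a := div_mul_cancel₀ _ (sub_pos.mpr hab).ne'
    simp only [smul_eq_mul]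
    linear_combination this
  have := hf.2 (left_mem_Icc.mpr hab.le) (right_mem_Icc.mpr hab.le) (sub_nonneg.mpr hμ1) hμ0
    (sub_add_cancel 1 μ)
  rw [ht_eq, smul_eq_mul, smul_eq_mul] at this
  rw [chord_eq_add_mul]
  linarith

end Chord

/-- the chord (inner approximation) of a concave function has
uniform error no larger than any affine outer approximation. -/
theorem stmt_18 (a b : ℝ) (hab : a < b) (Φ ΓOA : ℝ → ℝ)
    (hconc : ConcaveOn ℝ (Set.Icc a b) Φ)
    (haff : ∃ c d : ℝ, ∀ t, ΓOA t = c * t + d)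
    (hmaj : ∀ t ∈ Set.Icc a b, Φ t ≤ ΓOA t) :
    sSup ((fun t => |Φ t - (Φ a + (Φ b - Φ a) / (b - a) * (t - a))|) ''
        Set.Icc a b) ≤
    sSup ((fun t => |Φ t - ΓOA t|) '' Set.Icc a b) := by
  obtain ⟨c, d, hcd⟩ := haff
  have ha : a ∈ Icc a b := left_mem_Icc.mpr hab.le
  have hb : b ∈ Icc a b := right_mem_Icc.mpr hab.le
  have hOA_err : ∀ t ∈ Icc a b, |Φ t - ΓOA t| = ΓOA t - Φ t := fun t ht => by
    rw [abs_sub_comm, abs_of_nonneg (sub_nonneg.mpr (hmaj t ht))]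
  set m := max (ΓOA a - Φ a) (ΓOA b - Φ b)
  have hbound : ∀ t ∈ Icc a b, ΓOA t - chord Φ a b t ≤ m := fun t ht => by
    rw [← chord_of_affine hcd hab.ne (t := t), ← chord_sub]
    exact chord_le_max hab ht
  have hOA : IsGreatest ((fun t => |Φ t - ΓOA t|) '' Icc a b) m := by
    refine ⟨?_, ?_⟩
    · rcases max_choice (ΓOA a - Φ a) (ΓOA b - Φ b) with h | h
      · exact ⟨a, ha, (hOA_err a ha).trans h.symm⟩
      · exact ⟨b, hb, (hOA_err b hb).trans h.symm⟩
    · rintro _ ⟨t, ht, rfl⟩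
      dsimp only
      linarith [hOA_err t ht, hconc.chord_le hab ht, hbound t ht]
  rw [hOA.csSup_eq]
  refine csSup_le ((nonempty_Icc.mpr hab.le).image _) ?_
  rintro _ ⟨t, ht, rfl⟩
  change |Φ t - chord Φ a b t| ≤ m
  rw [abs_of_nonneg (sub_nonneg.mpr (hconc.chord_le hab ht))]
  linarith [hmaj t ht, hbound t ht]
end
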